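/- Let q̄ = (q_1, q_2, ...) be an infinite sequence of probabilities such that for some 0 < l_1 < l_2 we have 0 < q_{l_1} < 1, q_{l_2} = 1, and q_l = 0 for all l ∉ {l_1, l_2}. Then the 0-1 law for L fails for M^n_{q̄}. -/

import Mathlib

/-!
Use the sentence "some vertex has degree one". Almost surely every pair at distance `l₂` is an edge
and every edge has length `l₁` or `l₂`, so vertex `1` has degree one as soon as `{1, 1 + l₁}` is not
an edge: the sentence holds with probability at least `1 - q_{l₁}`. Conversely, a vertex far from
both ends of `[n]` has the two neighbours `i ± l₂`, and a vertex near an end gets a second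
neighbour from one of the at most `2 l₂` pairs `{i, i + l₁}` near that end; if all of these are
edges, which happens with probability at least `q_{l₁}^{2 l₂}`, the sentence fails. So the
probability stays in `[1 - q_{l₁}, 1 - q_{l₁}^{2 l₂}]`, away from `0` and `1`.
-/

open FirstOrder Filter

/-- The simple graph on `Fin n` determined by a boolean function on unordered pairs. -/
def graphOf {n : ℕ} (f : Sym2 (Fin n) → Bool) : SimpleGraph (Fin n) where
  Adj i j := i ≠ j ∧ f s(i, j)
  symm := by
    constructor
    intro i j h
    exact ⟨Ne.symm h.1, by rw [Sym2.eq_swap]; exact h.2⟩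
  loopless := by constructor; intro i h; exact h.1 rfl

/-- The probability that the pair `e` is an edge, given edge probabilities `p`
indexed by the distance between the endpoints. -/
noncomputable def edgeProb (p : ℕ → ℝ) {n : ℕ} (e : Sym2 (Fin n)) : ℝ :=
  Sym2.lift ⟨fun i j => p (Nat.dist i.val j.val),
    fun i j => by simp only [Nat.dist_comm]⟩ e

/-- The probability weight of a particular configuration of edges. -/
noncomputable def weight (p : ℕ → ℝ) {n : ℕ} (f : Sym2 (Fin n) → Bool) : ℝ :=
  ∏ e : Sym2 (Fin n),
    if e.IsDiag then (if f e then 0 else 1)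
    else (if f e then edgeProb p e else 1 - edgeProb p e)

open Classical in
/-- The probability that the random graph `M^n_{p̄}` (on vertex set `Fin n`,
representing `[n] = {1,…,n}`, where distinct vertices at distance `d` are joined
independently with probability `p d`) satisfies the event `E`. -/
noncomputable def probEvent (p : ℕ → ℝ) (n : ℕ) (E : SimpleGraph (Fin n) → Prop) : ℝ :=
  ∑ f : Sym2 (Fin n) → Bool, if E (graphOf f) then weight p f else 0

/-- The probability that `M^n_{p̄}` satisfies the first-order sentence `ψ`
in the language of graphs. -/
noncomputable def probSat (p : ℕ → ℝ) (n : ℕ) (ψ : Language.graph.Sentence) : ℝ :=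
  probEvent p n (fun G => @Language.Sentence.Realize _ _ G.structure ψ)

/-- `M^n_{p̄}` satisfies the 0-1 law for first order logic. -/
def ZeroOneLaw (p : ℕ → ℝ) : Prop :=
  ∀ ψ : Language.graph.Sentence, ∃ c : ℝ, (c = 0 ∨ c = 1) ∧
    Tendsto (fun n => probSat p n ψ) atTop (nhds c)

/-- `M^n_{p̄}` satisfies the convergence law for first order logic. -/
def ConvergenceLaw (p : ℕ → ℝ) : Prop :=
  ∀ ψ : Language.graph.Sentence, ∃ c : ℝ,
    Tendsto (fun n => probSat p n ψ) atTop (nhds c)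

/-- `M^n_{p̄}` satisfies the weak convergence law for first order logic. -/
def WeakConvergenceLaw (p : ℕ → ℝ) : Prop :=
  ∀ ψ : Language.graph.Sentence,
    limsup (fun n => probSat p n ψ) atTop - liminf (fun n => probSat p n ψ) atTop < 1

/-- `q̄ ∈ Gen₁(p̄)`: `q̄` is obtained from `p̄` by inserting zeros (indices start at 1). -/
def Gen1 (p q : ℕ → ℝ) : Prop :=
  ∃ f : ℕ → ℕ, (∀ i j, 1 ≤ i → i < j → f i < f j) ∧ (∀ i, 1 ≤ i → 1 ≤ f i) ∧
    (∀ i, 1 ≤ i → q (f i) = p i) ∧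
    (∀ l, 1 ≤ l → (∀ i, 1 ≤ i → f i ≠ l) → q l = 0)

/-- `q̄ ∈ Gen₂(p̄)`: `q̄` is obtained from `p̄` by decreasing entries. -/
def Gen2 (p q : ℕ → ℝ) : Prop :=
  ∀ l, 1 ≤ l → q l ∈ Set.Icc (0 : ℝ) (p l)

/-- `q̄ ∈ Gen₃(p̄)`: `q̄` is obtained from `p̄` by replacing some entries with zero. -/
def Gen3 (p q : ℕ → ℝ) : Prop :=
  ∀ l, 1 ≤ l → q l = 0 ∨ q l = p l

/-- The condition `lim_{n→∞} log(∏_{i=1}^n (1-p_i))/log n = 0`. -/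
def StarCondition (p : ℕ → ℝ) : Prop :=
  Tendsto (fun n : ℕ => Real.log (∏ i ∈ Finset.Icc 1 n, (1 - p i)) / Real.log n)
    atTop (nhds 0)

open Finset

noncomputable def pairWeight (p : ℕ → ℝ) {n : ℕ} (e : Sym2 (Fin n)) (v : Bool) : ℝ :=
  if e.IsDiag then (if v then 0 else 1)
  else (if v then edgeProb p e else 1 - edgeProb p e)

section Model

variable {p : ℕ → ℝ} {n : ℕ}

theorem graphOf_adj (f : Sym2 (Fin n) → Bool) (i j : Fin n) :
    (graphOf f).Adj i j ↔ i ≠ j ∧ f s(i, j) = true :=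
  Iff.rfl

@[simp]
theorem edgeProb_mk (i j : Fin n) : edgeProb p s(i, j) = p (Nat.dist i j) :=
  rfl

theorem weight_eq_prod_pairWeight (f : Sym2 (Fin n) → Bool) :
    weight p f = ∏ e, pairWeight p e (f e) :=
  rfl

theorem pairWeight_mk_of_ne {i j : Fin n} (hij : i ≠ j) (v : Bool) :
    pairWeight p s(i, j) v = if v then p (Nat.dist i j) else 1 - p (Nat.dist i j) := by
  simp [pairWeight, hij]

theorem pairWeight_true_add_false (e : Sym2 (Fin n)) :
    pairWeight p e true + pairWeight p e false = 1 := by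
  by_cases h : e.IsDiag <;> simp [pairWeight, h]

theorem pairWeight_nonneg (hp : ∀ d, p d ∈ Set.Icc 0 1) (e : Sym2 (Fin n)) (v : Bool) :
    0 ≤ pairWeight p e v := by
  induction e using Sym2.ind with
  | _ i j =>
    by_cases hij : i = j
    · subst hij
      cases v <;> simp [pairWeight]
    · obtain ⟨h0, h1⟩ := hp (Nat.dist i j)
      rw [pairWeight_mk_of_ne hij]
      split <;> linarith

theorem weight_nonneg (hp : ∀ d, p d ∈ Set.Icc 0 1) (f : Sym2 (Fin n) → Bool) :
    0 ≤ weight p f :=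
  prod_nonneg fun e _ => pairWeight_nonneg hp e (f e)

open Classical in
theorem sum_weight_of_forall_mem_eq (T : Finset (Sym2 (Fin n))) (b : Bool) :
    (∑ f : Sym2 (Fin n) → Bool, if ∀ e ∈ T, f e = b then weight p f else 0) =
      ∏ e ∈ T, pairWeight p e b := by
  set g : Sym2 (Fin n) → Bool → ℝ := fun e v => if e ∈ T ∧ v ≠ b then 0 else pairWeight p e v
  have hterm (f : Sym2 (Fin n) → Bool) :
      (if ∀ e ∈ T, f e = b then weight p f else 0) = ∏ e, g e (f e) := by
    split_ifs with h
    · exact prod_congr rfl fun e _ => (if_neg fun he => he.2 (h e he.1)).symm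
    · simp only [not_forall] at h
      obtain ⟨e, he, hne⟩ := h
      exact (prod_eq_zero (mem_univ e) (by simp [g, he, hne])).symm
  have hfactor (e : Sym2 (Fin n)) : ∑ v, g e v = if e ∈ T then pairWeight p e b else 1 := by
    by_cases he : e ∈ T
    · cases b <;> simp [g, he]
    · simp [g, he, pairWeight_true_add_false]
  simp_rw [hterm, ← Fintype.prod_sum, hfactor, prod_ite_mem, univ_inter]

theorem sum_weight_eq_one : ∑ f : Sym2 (Fin n) → Bool, weight p f = 1 := by
  classical
  simpa using sum_weight_of_forall_mem_eq (p := p) (∅ : Finset (Sym2 (Fin n))) true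

theorem probEvent_add_probEvent_not (E : SimpleGraph (Fin n) → Prop) :
    probEvent p n E + probEvent p n (fun G => ¬ E G) = 1 := by
  classical
  rw [probEvent, probEvent, ← sum_add_distrib, ← sum_weight_eq_one (p := p)]
  refine sum_congr rfl fun f _ => ?_
  by_cases h : E (graphOf f) <;> simp [h]

theorem prod_pairWeight_le_probEvent (hp : ∀ d, p d ∈ Set.Icc 0 1)
    (E : SimpleGraph (Fin n) → Prop) (T : Finset (Sym2 (Fin n))) (b : Bool)
    (hE : ∀ f : Sym2 (Fin n) → Bool, (∀ e ∈ T, f e = b) → weight p f ≠ 0 → E (graphOf f)) :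
    ∏ e ∈ T, pairWeight p e b ≤ probEvent p n E := by
  classical
  rw [← sum_weight_of_forall_mem_eq, probEvent]
  refine sum_le_sum fun f _ => ?_
  by_cases hT : ∀ e ∈ T, f e = b
  · by_cases hf : weight p f = 0
    · simp [hf]
    · rw [if_pos hT, if_pos (hE f hT hf)]
  · simp only [hT, if_false]
    split <;> simp [weight_nonneg hp]

theorem pairWeight_ne_zero_of_weight_ne_zero {f : Sym2 (Fin n) → Bool} (hf : weight p f ≠ 0)
    (e : Sym2 (Fin n)) : pairWeight p e (f e) ≠ 0 := by
  rw [weight_eq_prod_pairWeight] at hf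
  exact prod_ne_zero_iff.mp hf e (mem_univ e)

theorem adj_of_weight_ne_zero {f : Sym2 (Fin n) → Bool} (hf : weight p f ≠ 0) {i j : Fin n}
    (hij : i ≠ j) (hd : p (Nat.dist i j) = 1) : (graphOf f).Adj i j := by
  have hW := pairWeight_ne_zero_of_weight_ne_zero hf s(i, j)
  rw [pairWeight_mk_of_ne hij, hd] at hW
  refine ⟨hij, ?_⟩
  cases hfe : f s(i, j) <;> simp_all

theorem apply_dist_ne_zero_of_adj {f : Sym2 (Fin n) → Bool} (hf : weight p f ≠ 0) {i j : Fin n}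
    (hadj : (graphOf f).Adj i j) : p (Nat.dist i j) ≠ 0 := by
  have hW := pairWeight_ne_zero_of_weight_ne_zero hf s(i, j)
  rwa [pairWeight_mk_of_ne hadj.1, hadj.2, if_pos rfl] at hW

end Model

open Language in
def existsDegreeOne : Language.graph.Sentence :=
  ∃' ∃' (adj.boundedFormula₂ (&0) (&1) ⊓
    ∀' (adj.boundedFormula₂ (&0) (&2) ⟹ Term.bdEqual (&2) (&1)))

theorem realize_existsDegreeOne_iff {V : Type*} (G : SimpleGraph V) :
    @Language.Sentence.Realize _ _ G.structure existsDegreeOne ↔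
      ∃ x y, G.Adj x y ∧ ∀ z, G.Adj x z → z = y := by
  let := G.structure
  simp [existsDegreeOne, Language.Sentence.Realize, Language.Formula.Realize,
    Language.Relations.boundedFormula₂, Language.Relations.boundedFormula,
    Language.Term.bdEqual]
  rfl

theorem exists_ne_adj_adj {n l1 l2 : ℕ} (h1 : 0 < l1) (h12 : l1 < l2) (hn : 2 * l2 ≤ n)
    {G : SimpleGraph (Fin n)} (hfar : ∀ i j : Fin n, j.val = i.val + l2 → G.Adj i j)
    (hnear : ∀ i j : Fin n, j.val = i.val + l1 → (i.val < l2 ∨ n ≤ j.val + l2) → G.Adj i j)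
    (x : Fin n) : ∃ y z, y ≠ z ∧ G.Adj x y ∧ G.Adj x z := by
  obtain ⟨m, hm⟩ := x
  rcases lt_or_ge m l2 with hstart | hstart
  · exact ⟨⟨m + l2, by omega⟩, ⟨m + l1, by omega⟩, by simp [Fin.ext_iff]; omega,
      hfar _ _ rfl, hnear _ _ rfl (.inl hstart)⟩
  rcases lt_or_ge (m + l2) n with hend | hend
  · exact ⟨⟨m - l2, by omega⟩, ⟨m + l2, hend⟩, by simp [Fin.ext_iff]; omega,
      (hfar _ _ (by simp; omega)).symm, hfar _ _ rfl⟩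
  · exact ⟨⟨m - l2, by omega⟩, ⟨m - l1, by omega⟩, by simp [Fin.ext_iff]; omega,
      (hfar _ _ (by simp; omega)).symm, (hnear _ _ (by simp; omega) (.inr hend)).symm⟩

def nearEndPairs (n d l : ℕ) : Finset (Sym2 (Fin n)) :=
  ((univ : Finset (Fin n × Fin n)).filter fun x =>
    x.2.val = x.1.val + d ∧ (x.1.val < l ∨ n ≤ x.2.val + l)).image fun x => s(x.1, x.2)

section NearEndPairs

variable {n d l : ℕ}

theorem mk_mem_nearEndPairs {i j : Fin n} (hij : j.val = i.val + d)
    (hend : i.val < l ∨ n ≤ j.val + l) : s(i, j) ∈ nearEndPairs n d l :=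
  mem_image.2 ⟨(i, j), mem_filter.2 ⟨mem_univ _, hij, hend⟩, rfl⟩

theorem card_nearEndPairs_le : (nearEndPairs n d l).card ≤ 2 * l := by
  refine card_image_le.trans ?_
  calc _ ≤ (range l ∪ Ico (n - d - l) (n - d)).card := by
        refine card_le_card_of_injOn (fun x => x.1.val) (fun x hx => ?_) fun x hx y hy hxy => ?_
        · simp only [coe_filter, mem_univ, true_and, Set.mem_ofPred_eq] at hx
          simp only [coe_union, coe_range, coe_Ico, Set.mem_union, Set.mem_Iio, Set.mem_Ico]
          omega
        · simp only [coe_filter, mem_univ, true_and, Set.mem_ofPred_eq] at hx hy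
          simp only at hxy
          exact Prod.ext (Fin.ext hxy) (Fin.ext (by omega))
    _ ≤ l + l := (card_union_le _ _).trans (by rw [card_range, Nat.card_Ico]; omega)
    _ = 2 * l := by ring

theorem prod_pairWeight_nearEndPairs (p : ℕ → ℝ) (hd : 0 < d) :
    ∏ e ∈ nearEndPairs n d l, pairWeight p e true = p d ^ (nearEndPairs n d l).card := by
  refine prod_eq_pow_card fun e he => ?_
  obtain ⟨⟨i, j⟩, hij, rfl⟩ := mem_image.1 he
  simp only [mem_filter, mem_univ, true_and] at hij
  change pairWeight p s(i, j) true = p d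
  rw [pairWeight_mk_of_ne (by simp [Fin.ext_iff]; omega), if_pos rfl]
  congr 1
  rw [Nat.dist_eq_sub_of_le (by omega)]
  omega

end NearEndPairs

section TwoDistances

variable {q : ℕ → ℝ} {l1 l2 n : ℕ}

theorem one_sub_le_probSat_existsDegreeOne (hq : ∀ d, q d ∈ Set.Icc 0 1) (h1 : 0 < l1)
    (h12 : l1 < l2) (hq2 : q l2 = 1) (hrest : ∀ l, l ≠ l1 → l ≠ l2 → q l = 0) (hn : l2 < n) :
    1 - q l1 ≤ probSat q n existsDegreeOne := by
  let o : Fin n := ⟨0, by omega⟩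
  let a : Fin n := ⟨l1, by omega⟩
  let b : Fin n := ⟨l2, hn⟩
  have hdist (z : Fin n) : Nat.dist o z = z := Nat.dist_zero_left z
  have hoa : o ≠ a := by simp [o, a, Fin.ext_iff]; omega
  calc 1 - q l1 = ∏ e ∈ {s(o, a)}, pairWeight q e false := by
        rw [prod_singleton, pairWeight_mk_of_ne hoa, hdist]
        rfl
    _ ≤ _ := prod_pairWeight_le_probEvent hq _ _ false fun f hT hf => ?_
  have hfoa : f s(o, a) = false := hT _ (mem_singleton_self _)
  refine (realize_existsDegreeOne_iff _).2 ⟨o, b, ?_, fun z hz => ?_⟩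
  · exact adj_of_weight_ne_zero hf (by simp [o, b, Fin.ext_iff]; omega) (by rw [hdist]; exact hq2)
  · have hqz := apply_dist_ne_zero_of_adj hf hz
    rw [hdist] at hqz
    by_contra hzb
    refine hqz (hrest z (fun hza => ?_) fun hzb' => hzb (Fin.ext hzb'))
    obtain rfl : z = a := Fin.ext hza
    simp [graphOf_adj, hfoa] at hz

theorem probSat_existsDegreeOne_le (hq : ∀ d, q d ∈ Set.Icc 0 1) (h1 : 0 < l1) (h12 : l1 < l2)
    (hq2 : q l2 = 1) (hn : 2 * l2 ≤ n) :
    probSat q n existsDegreeOne ≤ 1 - q l1 ^ (2 * l2) := by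
  have hnot : q l1 ^ (2 * l2) ≤
      probEvent q n fun G => ¬ @Language.Sentence.Realize _ _ G.structure existsDegreeOne := by
    calc q l1 ^ (2 * l2) ≤ q l1 ^ (nearEndPairs n l1 l2).card :=
          pow_le_pow_of_le_one (hq l1).1 (hq l1).2 card_nearEndPairs_le
      _ = ∏ e ∈ nearEndPairs n l1 l2, pairWeight q e true :=
          (prod_pairWeight_nearEndPairs q h1).symm
      _ ≤ _ := prod_pairWeight_le_probEvent hq _ _ true fun f hT hf => ?_
    have hdist {i j : Fin n} {d : ℕ} (hij : j.val = i.val + d) : Nat.dist i j = d := by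
      rw [Nat.dist_eq_sub_of_le (by omega)]
      omega
    have hfar (i j : Fin n) (hij : j.val = i.val + l2) : (graphOf f).Adj i j :=
      adj_of_weight_ne_zero hf (by simp [Fin.ext_iff]; omega) (by rw [hdist hij, hq2])
    have hnear (i j : Fin n) (hij : j.val = i.val + l1) (hend : i.val < l2 ∨ n ≤ j.val + l2) :
        (graphOf f).Adj i j :=
      ⟨by simp [Fin.ext_iff]; omega, hT _ (mk_mem_nearEndPairs hij hend)⟩
    intro hleaf
    obtain ⟨x, y, -, hy⟩ := (realize_existsDegreeOne_iff _).1 hleaf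
    obtain ⟨z, z', hzz', hz, hz'⟩ := exists_ne_adj_adj h1 h12 hn hfar hnear x
    exact hzz' ((hy z hz).trans (hy z' hz').symm)
  have := probEvent_add_probEvent_not (p := q) (n := n)
    fun G => @Language.Sentence.Realize _ _ G.structure existsDegreeOne
  rw [probSat]
  linarith

end TwoDistances

theorem statement_15 (q : ℕ → ℝ) (l1 l2 : ℕ) (h1 : 0 < l1) (h12 : l1 < l2)
    (hq1 : 0 < q l1 ∧ q l1 < 1) (hq2 : q l2 = 1)
    (hrest : ∀ l, l ≠ l1 → l ≠ l2 → q l = 0) :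
    ¬ ZeroOneLaw q := by
  have hq (d : ℕ) : q d ∈ Set.Icc 0 1 := by
    by_cases hd1 : d = l1
    · exact hd1 ▸ ⟨hq1.1.le, hq1.2.le⟩
    by_cases hd2 : d = l2
    · simp [hd2, hq2]
    · simp [hrest d hd1 hd2]
  rintro hlaw
  obtain ⟨c, hc, hlim⟩ := hlaw existsDegreeOne
  have hlower : 1 - q l1 ≤ c := ge_of_tendsto hlim <| eventually_atTop.2
    ⟨l2 + 1, fun n hn => one_sub_le_probSat_existsDegreeOne hq h1 h12 hq2 hrest hn⟩
  have hupper : c ≤ 1 - q l1 ^ (2 * l2) := le_of_tendsto hlim <| eventually_atTop.2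
    ⟨2 * l2, fun n hn => probSat_existsDegreeOne_le hq h1 h12 hq2 hn⟩
  have hpow : 0 < q l1 ^ (2 * l2) := pow_pos hq1.1 _
  rcases hc with rfl | rfl <;> linarith [hq1.2]
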